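/- arXiv:1908.06715 — 7 statements merged into one kernel-verified Lean document; each statement's English description precedes it below -/
import Mathlib

section
/- Let 0 ≤ m_1 ≤ m_2 ≤ ... ≤ m_K be reals. Define l_1 = min(m_1, 1/K) and recursively l_k = min(m_k, (1 - Σ_{i=1}^{k-1} l_i)/(K-k+1)) for k = 2,...,K. If Σ_{k=1}^K m_k ≥ 1, then Σ_{k=1}^K l_k = 1. -/
/-- Partial sums of the first-step file allocation: `allocS m K k = ∑_{i<k} l i`,
where (0-indexed) `l k = min (m k) ((1 - ∑_{i<k} l i)/(K - k))`. -/
noncomputable def allocS (m : ℕ → ℝ) (K : ℕ) : ℕ → ℝ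
  | 0 => 0
  | k + 1 => allocS m K k + min (m k) ((1 - allocS m K k) / ((K : ℝ) - k))

/-- The `k`-th first-step allocation fraction (0-indexed):
`l 0 = min (m 0) (1/K)`, and `l k = min (m k) ((1 - ∑_{i<k} l i)/(K - k))`. -/
noncomputable def allocL (m : ℕ → ℝ) (K : ℕ) (k : ℕ) : ℝ :=
  min (m k) ((1 - allocS m K k) / ((K : ℝ) - k))

/-- If `0 ≤ m 0 ≤ m 1 ≤ ... ≤ m (K-1)` and `∑_{k<K} m k ≥ 1`, then the
first-step allocation fractions sum to `1`. -/
theorem stmt_1 (K : ℕ) (hK : 1 ≤ K) (m : ℕ → ℝ) (hm0 : 0 ≤ m 0)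
    (hmono : ∀ i j, i ≤ j → j < K → m i ≤ m j)
    (hsum : 1 ≤ ∑ k ∈ Finset.range K, m k) :
    ∑ k ∈ Finset.range K, allocL m K k = 1 := by
  have hSsum : ∀ n, allocS m K n = ∑ k ∈ Finset.range n, allocL m K k := by
    intro n
    induction n with
    | zero => simp [allocS]
    | succ n ih => simp [allocS, allocL, Finset.sum_range_succ, ih]
  rw [← hSsum]
  -- main invariant
  have key : ∀ k, k ≤ K → 0 ≤ 1 - allocS m K k ∧
      1 - allocS m K k ≤ ∑ i ∈ Finset.Ico k K, m i := by
    intro k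
    induction k with
    | zero =>
      intro _
      constructor
      · simp [allocS]
      · have h : allocS m K 0 = 0 := rfl
        rw [h, ← Finset.range_eq_Ico]
        linarith
    | succ k ih =>
      intro hk1
      have hkK : k < K := hk1
      obtain ⟨h0, hle⟩ := ih (le_of_lt hkK)
      set S := allocS m K k with hS
      have hd : (1 : ℝ) ≤ (K : ℝ) - k := by
        have : (k : ℝ) + 1 ≤ K := by exact_mod_cast hk1
        linarith
      have hdpos : (0 : ℝ) < (K : ℝ) - k := by linarith
      have hlmin : min (m k) ((1 - S) / ((K : ℝ) - k)) ≤ (1 - S) / ((K : ℝ) - k) :=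
        min_le_right _ _
      have hdivle : (1 - S) / ((K : ℝ) - k) ≤ 1 - S := div_le_self h0 hd
      have hnonneg : 0 ≤ 1 - allocS m K (k + 1) := by
        show 0 ≤ 1 - (S + min (m k) ((1 - S) / ((K : ℝ) - k)))
        have : (1 - S) / ((K : ℝ) - k) ≤ (1 - S) := hdivle
        have h1 : 1 - (S + (1 - S) / ((K : ℝ) - k)) =
            (1 - S) * (((K : ℝ) - k - 1) / ((K : ℝ) - k)) := by
          field_simp
          ring
        have h2 : 0 ≤ (1 - S) * (((K : ℝ) - k - 1) / ((K : ℝ) - k)) := by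
          apply mul_nonneg h0
          apply div_nonneg (by linarith) (le_of_lt hdpos)
        linarith
      refine ⟨hnonneg, ?_⟩
      have hsplit : ∑ i ∈ Finset.Ico k K, m i = m k + ∑ i ∈ Finset.Ico (k + 1) K, m i :=
        Finset.sum_eq_sum_Ico_succ_bot hkK m
      rcases le_total (m k) ((1 - S) / ((K : ℝ) - k)) with hc | hc
      · -- l = m k
        have : allocS m K (k + 1) = S + m k := by
          show S + min (m k) ((1 - S) / ((K : ℝ) - k)) = S + m k
          rw [min_eq_left hc]
        rw [this]
        linarith [hsplit ▸ hle]
      · -- l = fair share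
        have hmk0 : 0 ≤ m k := le_trans hm0 (hmono 0 k (Nat.zero_le _) hkK)
        have heq : allocS m K (k + 1) = S + (1 - S) / ((K : ℝ) - k) := by
          show S + min (m k) ((1 - S) / ((K : ℝ) - k)) = _
          rw [min_eq_right hc]
        rw [heq]
        have hcard : (Finset.Ico (k + 1) K).card = K - (k + 1) := Nat.card_Ico _ _
        have hlb : ∀ i ∈ Finset.Ico (k + 1) K, (1 - S) / ((K : ℝ) - k) ≤ m i := by
          intro i hi
          rw [Finset.mem_Ico] at hi
          exact le_trans hc (hmono k i (le_of_lt hi.1) hi.2)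
        have hsum2 : ((K - (k + 1) : ℕ) : ℝ) * ((1 - S) / ((K : ℝ) - k)) ≤
            ∑ i ∈ Finset.Ico (k + 1) K, m i := by
          have := Finset.card_nsmul_le_sum (Finset.Ico (k + 1) K) m
            ((1 - S) / ((K : ℝ) - k)) hlb
          rw [hcard] at this
          simpa [nsmul_eq_mul] using this
        have hcast : ((K - (k + 1) : ℕ) : ℝ) = (K : ℝ) - k - 1 := by
          rw [Nat.cast_sub hk1]
          push_cast
          ring
        rw [hcast] at hsum2
        have h1 : 1 - (S + (1 - S) / ((K : ℝ) - k)) =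
            ((K : ℝ) - k - 1) * ((1 - S) / ((K : ℝ) - k)) := by
          field_simp
          ring
        linarith
  obtain ⟨h0, hle⟩ := key K le_rfl
  simp only [Finset.Ico_self, Finset.sum_empty] at hle
  linarith
end

section
/- Let 0 ≤ m_1 ≤ ... ≤ m_K and define l_k recursively by l_1 = min(m_1, 1/K), l_k = min(m_k, (1 - Σ_{i=1}^{k-1} l_i)/(K-k+1)). If m_k ≤ (1 - Σ_{i=1}^{k-1} l_i)/(K-k+1) for some k ∈ {2,...,K}, then m_{k-1} ≤ (1 - Σ_{i=1}^{k-2} l_i)/(K-k+2). -/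
lemma key_arith (A d mj mk : ℝ) (hd : 1 < d)
    (h1 : mk ≤ (1 - (A + (1 - A)/d)) / (d - 1))
    (h2 : mj ≤ mk) (h3 : (1 - A)/d < mj) : False := by
  have h0 : d ≠ 0 := by linarith
  have h1' : d - 1 ≠ 0 := by linarith
  have hAd : (1 - (A + (1 - A)/d)) / (d - 1) = (1 - A)/d := by
    rw [div_eq_div_iff h1' h0]
    field_simp
    ring
  rw [hAd] at h1
  linarith

/-- If `m` is sorted nondecreasingly and nonnegative, and node `k` (0-indexed,
`1 ≤ k < K`) satisfies `m k ≤ (1 - ∑_{i<k} l i)/(K - k)`, then the previous node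
also satisfies `m (k-1) ≤ (1 - ∑_{i<k-1} l i)/(K - (k-1))`. -/
theorem stmt_2 (K : ℕ) (m : ℕ → ℝ) (hm0 : 0 ≤ m 0)
    (hmono : ∀ i j, i ≤ j → j < K → m i ≤ m j)
    (k : ℕ) (hk1 : 1 ≤ k) (hkK : k < K)
    (h : m k ≤ (1 - allocS m K k) / ((K : ℝ) - k)) :
    m (k - 1) ≤ (1 - allocS m K (k - 1)) / ((K : ℝ) - (k - 1)) := by
  obtain ⟨j, rfl⟩ : ∃ j, k = j + 1 := ⟨k - 1, (Nat.succ_pred_eq_of_pos hk1).symm⟩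
  simp only [Nat.add_sub_cancel]
  by_contra h'
  push_neg at h'
  simp only [Nat.cast_add, Nat.cast_one, add_sub_cancel_right] at h'
  have hd1 : (1:ℝ) < (K:ℝ) - j := by
    have : ((j:ℝ) + 2) ≤ K := by exact_mod_cast hkK
    linarith
  have hmin : min (m j) ((1 - allocS m K j) / ((K:ℝ) - j))
      = (1 - allocS m K j) / ((K:ℝ) - j) := min_eq_right (le_of_lt h')
  have hS : allocS m K (j+1) = allocS m K j + (1 - allocS m K j) / ((K:ℝ) - j) := by
    rw [allocS, hmin]
  rw [hS] at h
  have hcast : ((K:ℝ) - ((j+1:ℕ):ℝ)) = ((K:ℝ) - j) - 1 := by push_cast; ring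
  rw [hcast] at h
  have hmj : m j ≤ m (j+1) := hmono j (j+1) (by omega) hkK
  exact key_arith (allocS m K j) ((K:ℝ) - j) (m j) (m (j+1)) hd1 h hmj h'
end

section
/- Let 0 ≤ m_1 ≤ ... ≤ m_K with l_k defined recursively by l_1 = min(m_1, 1/K), l_k = min(m_k, (1 - Σ_{i=1}^{k-1} l_i)/(K-k+1)). Then l_1 ≤ l_2 ≤ ... ≤ l_K. -/
lemma alloc_adj (K : ℕ) (m : ℕ → ℝ)
    (hmono : ∀ i j, i ≤ j → j < K → m i ≤ m j)
    (k : ℕ) (hk : k + 1 < K) :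
    allocL m K k ≤ allocL m K (k + 1) := by
  have hKk : (0:ℝ) < (K : ℝ) - k := by
    have : (k:ℝ) + 1 < K := by exact_mod_cast hk
    linarith
  have hKk1 : (0:ℝ) < (K : ℝ) - (k + 1) := by
    have : ((k+1:ℕ):ℝ) < K := by exact_mod_cast hk
    push_cast at this; linarith
  set S := allocS m K k with hS
  set l := allocL m K k with hl
  have hlm : l ≤ m k := min_le_left _ _
  have hlr : l ≤ (1 - S) / ((K:ℝ) - k) := min_le_right _ _
  have hSsucc : allocS m K (k+1) = S + l := rfl
  have h1 : l ≤ m (k + 1) := hlm.trans (hmono k (k+1) (Nat.le_succ k) hk)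
  have h2 : l ≤ (1 - allocS m K (k+1)) / ((K:ℝ) - (k+1)) := by
    rw [hSsucc, le_div_iff₀ hKk1]
    have := (le_div_iff₀ hKk).mp hlr
    nlinarith
  have : l ≤ allocL m K (k+1) := by
    rw [allocL]
    push_cast
    exact le_min h1 (by push_cast at h2; exact h2)
  exact this

/-- If `0 ≤ m 0 ≤ ... ≤ m (K-1)`, then `l 0 ≤ l 1 ≤ ... ≤ l (K-1)`. -/
theorem stmt_3 (K : ℕ) (m : ℕ → ℝ) (hm0 : 0 ≤ m 0)
    (hmono : ∀ i j, i ≤ j → j < K → m i ≤ m j)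
    (j k : ℕ) (hjk : j ≤ k) (hkK : k < K) :
    allocL m K j ≤ allocL m K k := by
  induction k with
  | zero =>
    interval_cases j
    exact le_refl _
  | succ n ih =>
    rcases Nat.lt_or_ge j (n+1) with h | h
    · exact (ih (Nat.lt_succ_iff.mp h) (Nat.lt_of_succ_lt hkK)).trans
        (alloc_adj K m hmono n hkK)
    · have : j = n + 1 := le_antisymm hjk h
      simp [this]
end

section
/- Let K ≥ 2, r an integer with 0 ≤ r ≤ K, and for k = r+1,...,K let P_k ∈ [0,1). For a fixed l ≥ 0 and a reordering s_1,...,s_{K-r} of {r+1,...,K}, the sum over all nonempty subsets Ψ of {r+1,...,K} of l·(∏_{j∈Ψ} P_j)·(∏_{j∈{r+1,...,K}\Ψ} (1-P_j))·max_{i∈Ψ} [w_i(1-P_i)/P_i], where the max is attained at the minimal reorder index, equals Σ_{i=1}^{K-r} l·w_{s_i}·∏_{j=1}^{i} (1-P_{s_j}), provided w_{s_1}(1-P_{s_1})/P_{s_1} ≥ ... ≥ w_{s_{K-r}}(1-P_{s_{K-r}})/P_{s_{K-r}} and all P_k > 0. -/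
/-!
Grouping the nonempty subsets `Ψ` by their minimum `i`, every `Ψ` is `insert i t` with
`t ⊆ Ioi i`, and its weight factors as `P i * (∏_{j < i} (1 - P j))` times
`(∏_{j ∈ t} P j) * (∏_{j ∈ Ioi i \ t} (1 - P j))`. The factor `P i` cancels the denominator of
`w i * (1 - P i) / P i`, and the remaining sum over `t` is the expansion of
`∏_{j > i} (P j + (1 - P j)) = 1`, leaving `l * w i * ∏_{j ≤ i} (1 - P j)`.
-/

open Finset

theorem Finset.sum_powerset_prod_mul_prod_one_sub {ι R : Type*} [DecidableEq ι] [CommRing R]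
    (s : Finset ι) (p : ι → R) :
    ∑ t ∈ s.powerset, (∏ i ∈ t, p i) * ∏ i ∈ s \ t, (1 - p i) = 1 := by
  rw [← prod_add]
  simp

variable {α β : Type*} [LinearOrder α]

theorem Finset.min'_insert_of_forall_lt {i : α} {t : Finset α} (ht : ∀ x ∈ t, i < x) :
    (insert i t).min' (insert_nonempty i t) = i :=
  le_antisymm (min'_le _ _ (mem_insert_self i t)) <| le_min' _ _ _ fun _ hx =>
    (mem_insert.1 hx).elim ge_of_eq fun hx => (ht _ hx).le

theorem Finset.sum_powerset_dite_min' [AddCommMonoid β] (s : Finset α) (g : α → Finset α → β) :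
    ∑ t ∈ s.powerset, (if h : t.Nonempty then g (t.min' h) t else 0)
      = ∑ i ∈ s, ∑ t ∈ {x ∈ s | i < x}.powerset, g i (insert i t) := by
  rw [← sum_filter_of_ne (p := Finset.Nonempty) fun t _ ht => by
      by_contra h; simp [h] at ht, sum_sigma']
  symm
  refine sum_bij' (fun p _ => insert p.1 p.2)
    (fun t ht => ⟨t.min' (mem_filter.1 ht).2, t.erase (t.min' (mem_filter.1 ht).2)⟩)
    ?_ ?_ ?_ ?_ ?_
  · intro p hp
    simp only [mem_sigma, mem_powerset, subset_iff, mem_filter] at hp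
    simp only [mem_filter, mem_powerset, insert_subset_iff]
    exact ⟨⟨hp.1, fun x hx => (hp.2 hx).1⟩, insert_nonempty _ _⟩
  · intro t ht
    obtain ⟨hts, hne⟩ := mem_filter.1 ht
    rw [mem_powerset] at hts
    simp only [mem_sigma, mem_powerset, subset_iff, mem_filter, mem_erase]
    exact ⟨hts (min'_mem t hne), fun x ⟨hx, hxt⟩ =>
      ⟨hts hxt, (min'_le t x hxt).lt_of_ne' hx⟩⟩
  · intro p hp
    simp only [mem_sigma, mem_powerset, subset_iff, mem_filter] at hp
    have hlt : ∀ x ∈ p.2, p.1 < x := fun x hx => (hp.2 hx).2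
    simp only [min'_insert_of_forall_lt hlt,
      erase_insert fun h => (hlt _ h).false]
  · intro t ht
    exact insert_erase (min'_mem t (mem_filter.1 ht).2)
  · intro p hp
    simp only [mem_sigma, mem_powerset, subset_iff, mem_filter] at hp
    rw [dif_pos (insert_nonempty _ _), min'_insert_of_forall_lt fun x hx => (hp.2 hx).2]

theorem Finset.prod_compl_insert_of_subset_Ioi [CommMonoid β] [Fintype α]
    [LocallyFiniteOrderBot α] [LocallyFiniteOrderTop α] {i : α} {t : Finset α}
    (ht : t ⊆ Ioi i) (f : α → β) :
    ∏ j ∈ (insert i t)ᶜ, f j = (∏ j ∈ Iio i, f j) * ∏ j ∈ Ioi i \ t, f j := by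
  rw [← prod_union]
  · congr 1
    ext j
    have := @ht j
    simp only [mem_compl, mem_insert, mem_union, mem_Iio, mem_sdiff, mem_Ioi] at this ⊢
    grind
  · exact disjoint_left.2 fun j hj hj' => (mem_Iio.1 hj).not_gt (mem_Ioi.1 (mem_sdiff.1 hj').1)

open Finset in
theorem stmt_4_general (n : ℕ) (l : ℝ)
    (P w : Fin n → ℝ) (hP0 : ∀ i, 0 < P i) :
    ∑ Ψ ∈ (Finset.univ : Finset (Fin n)).powerset,
      (if h : Ψ.Nonempty then
        l * (∏ j ∈ Ψ, P j) * (∏ j ∈ Ψᶜ, (1 - P j)) *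
          (w (Ψ.min' h) * (1 - P (Ψ.min' h)) / P (Ψ.min' h))
      else 0)
    = ∑ i : Fin n, l * w i * ∏ j ∈ Finset.univ.filter (· ≤ i), (1 - P j) := by
  calc _ = ∑ i, ∑ t ∈ (Ioi i).powerset, l * (∏ j ∈ insert i t, P j) *
        (∏ j ∈ (insert i t)ᶜ, (1 - P j)) * (w i * (1 - P i) / P i) := by
        refine (sum_powerset_dite_min' _ fun i t =>
          l * (∏ j ∈ t, P j) * (∏ j ∈ tᶜ, (1 - P j)) * (w i * (1 - P i) / P i)).trans ?_
        simp only [filter_lt_eq_Ioi]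
    _ = ∑ i, l * w i * ((1 - P i) * ∏ j ∈ Iio i, (1 - P j)) *
        ∑ t ∈ (Ioi i).powerset, (∏ j ∈ t, P j) * ∏ j ∈ Ioi i \ t, (1 - P j) := by
        refine sum_congr rfl fun i _ => ?_
        rw [mul_sum]
        refine sum_congr rfl fun t ht => ?_
        have ht : t ⊆ Ioi i := mem_powerset.1 ht
        rw [prod_insert fun hi => (mem_Ioi.1 (ht hi)).false, prod_compl_insert_of_subset_Ioi ht]
        field_simp [(hP0 i).ne']
    _ = _ := by
        simp only [sum_powerset_prod_mul_prod_one_sub, mul_one, filter_ge_eq_Iic, ← Iio_insert,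
          prod_insert notMem_Iio_self]

open Finset in
/-- Shuffle-load identity: with high-computation-load nodes indexed by `Fin n`
(already reordered so that `i ↦ w i * (1 - P i) / P i` is nonincreasing, so the
max over a nonempty subset `Ψ` is attained at its minimal index), the total
coded-multicast load
`∑_{∅ ≠ Ψ ⊆ [n]} l * (∏_{j∈Ψ} P j) * (∏_{j∉Ψ} (1 - P j)) * max_{i∈Ψ} w i (1-P i)/P i`
equals `∑_{i} l * w i * ∏_{j ≤ i} (1 - P j)`. -/
theorem stmt_4 (n : ℕ) (hn : 1 ≤ n) (l : ℝ) (hl : 0 ≤ l)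
    (P w : Fin n → ℝ) (hP0 : ∀ i, 0 < P i) (hP1 : ∀ i, P i < 1)
    (hw : ∀ i j : Fin n, i ≤ j →
      w j * (1 - P j) / P j ≤ w i * (1 - P i) / P i) :
    ∑ Ψ ∈ (Finset.univ : Finset (Fin n)).powerset,
      (if h : Ψ.Nonempty then
        l * (∏ j ∈ Ψ, P j) * (∏ j ∈ Ψᶜ, (1 - P j)) *
          (w (Ψ.min' h) * (1 - P (Ψ.min' h)) / P (Ψ.min' h))
      else 0)
    = ∑ i : Fin n, l * w i * ∏ j ∈ Finset.univ.filter (· ≤ i), (1 - P j) :=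
  stmt_4_general n l P w hP0
end

section
/- Let r < K be integers with K - r ≥ 1, let ξ ∈ [0,1), and for k ∈ {r+1,...,K} let m_k ∈ [(1-ξ)/(K-r), 1) with P_k = (m_k - (1-ξ)/(K-r))/(1 - (1-ξ)/(K-r)) > 0. Then 1/(Σ_{k=r+1}^{K} P_k/(1-P_k)) ≤ ((K-r) - Σ_{k=r+1}^{K} m_k) / ((K-r)·(Σ_{k=1}^{K} m_k - 1)), where Σ_{k=1}^{K} m_k > 1 and ξ = Σ_{k=1}^{r} m_k. -/
/-!
Writing `c = (1 - ξ)/(K - r)`, each odds `P/(1 - P)` equals `(1 - c)/(1 - m) - 1`, so the sum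
of the odds is an affine function of `∑ 1/(1 - m k)`. The AM-HM inequality bounds that sum from
below by `(K - r)²/∑ (1 - m k)`, and `(K - r) c = 1 - ξ = 1 - ∑_{k ≤ r} m k` turns the resulting
bound into the claimed one.
-/

open Finset

section AMHM

variable {ι K : Type*} [Field K] [LinearOrder K] [IsStrictOrderedRing K]

theorem Finset.card_sq_le_sum_mul_sum_inv (s : Finset ι) {f : ι → K} (hf : ∀ i ∈ s, 0 < f i) :
    (#s : K) ^ 2 ≤ (∑ i ∈ s, f i) * ∑ i ∈ s, (f i)⁻¹ := by
  simpa using sum_sq_le_sum_mul_sum_of_sq_le_mul s (r := fun _ ↦ (1 : K))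
    (fun i hi ↦ (hf i hi).le) (fun i hi ↦ (inv_pos.2 (hf i hi)).le)
    (fun i hi ↦ by rw [one_pow, mul_inv_cancel₀ (hf i hi).ne'])

end AMHM

theorem Finset.sum_Icc_one_add_sum_Icc_add_one {M : Type*} [AddCommMonoid M] (f : ℕ → M)
    {n k : ℕ} (hnk : n ≤ k) :
    ∑ i ∈ Icc 1 n, f i + ∑ i ∈ Icc (n + 1) k, f i = ∑ i ∈ Icc 1 k, f i := by
  simpa only [← Icc_add_one_left_eq_Ioc, zero_add] using sum_Ioc_consecutive f n.zero_le hnk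

section Odds

variable {ι K : Type*} [Field K]

def odds (p : K) : K := p / (1 - p)

theorem odds_sub_div_one_sub {m c : K} (hc : c ≠ 1) (hm : m ≠ 1) :
    odds ((m - c) / (1 - c)) = (1 - c) / (1 - m) - 1 := by
  have hc' : 1 - c ≠ 0 := sub_ne_zero.2 hc.symm
  have hm' : 1 - m ≠ 0 := sub_ne_zero.2 hm.symm
  have h1P : 1 - (m - c) / (1 - c) = (1 - m) / (1 - c) := by field_simp; ring
  rw [odds, h1P, div_div_div_cancel_right₀ hc']
  field_simp
  ring

variable [LinearOrder K] [IsStrictOrderedRing K]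

theorem card_mul_sum_sub_le_sum_one_sub_mul_sum_odds (s : Finset ι) {m : ι → K} {c : K}
    (hc : c < 1) (hm : ∀ i ∈ s, m i < 1) :
    #s * (∑ i ∈ s, m i - #s * c) ≤
      (∑ i ∈ s, (1 - m i)) * ∑ i ∈ s, odds ((m i - c) / (1 - c)) := by
  have hodds : ∑ i ∈ s, odds ((m i - c) / (1 - c)) = (1 - c) * ∑ i ∈ s, (1 - m i)⁻¹ - #s := by
    rw [sum_congr rfl fun i hi ↦ odds_sub_div_one_sub hc.ne (hm i hi).ne, sum_sub_distrib,
      mul_sum, sum_const, nsmul_one]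
    simp only [div_eq_mul_inv]
  have hU : ∑ i ∈ s, (1 - m i) = #s - ∑ i ∈ s, m i := by
    rw [sum_sub_distrib, sum_const, nsmul_one]
  have hAMHM := card_sq_le_sum_mul_sum_inv s fun i hi ↦ sub_pos.2 (hm i hi)
  rw [hodds]
  nlinarith [mul_le_mul_of_nonneg_left hAMHM (sub_nonneg.2 hc.le)]

end Odds

theorem stmt_13_general (K r : ℕ) (hrK : r < K)
    (ξ : ℝ)
    (m P : ℕ → ℝ)
    (hξdef : ξ = ∑ k ∈ Finset.Icc 1 r, m k)
    (hm : ∀ k ∈ Finset.Icc (r + 1) K,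
      (1 - ξ) / ((K : ℝ) - r) ≤ m k ∧ m k < 1)
    (hPdef : ∀ k ∈ Finset.Icc (r + 1) K,
      P k = (m k - (1 - ξ) / ((K : ℝ) - r)) / (1 - (1 - ξ) / ((K : ℝ) - r)))
    (hsum : 1 < ∑ k ∈ Finset.Icc 1 K, m k) :
    1 / (∑ k ∈ Finset.Icc (r + 1) K, P k / (1 - P k))
      ≤ (((K : ℝ) - r) - ∑ k ∈ Finset.Icc (r + 1) K, m k) /
          (((K : ℝ) - r) * ((∑ k ∈ Finset.Icc 1 K, m k) - 1)) := by
  set A := Icc (r + 1) K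
  set c := (1 - ξ) / ((K : ℝ) - r)
  have hcard : (#A : ℝ) = K - r := by simp [A, Nat.cast_sub hrK.le]
  have hN : (0 : ℝ) < K - r := sub_pos.2 (by exact_mod_cast hrK)
  have hsplit : ξ + ∑ k ∈ A, m k = ∑ k ∈ Icc 1 K, m k :=
    hξdef ▸ sum_Icc_one_add_sum_Icc_add_one m hrK.le
  have hc : c < 1 := by
    have hr1 : r + 1 ∈ A := mem_Icc.2 ⟨le_rfl, hrK⟩
    exact (hm _ hr1).1.trans_lt (hm _ hr1).2
  have hodds : ∑ k ∈ A, P k / (1 - P k) = ∑ k ∈ A, odds ((m k - c) / (1 - c)) :=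
    sum_congr rfl fun k hk ↦ by rw [hPdef k hk]; rfl
  have hkey := card_mul_sum_sub_le_sum_one_sub_mul_sum_odds A hc fun k hk ↦ (hm k hk).2
  have hNc : (#A : ℝ) * c = 1 - ξ := by rw [hcard]; exact mul_div_cancel₀ _ hN.ne'
  have hU : ∑ k ∈ A, (1 - m k) = (K - r) - ∑ k ∈ A, m k := by
    rw [sum_sub_distrib, sum_const, nsmul_one, hcard]
  have hD : 0 < (K - r) * (∑ k ∈ Icc 1 K, m k - 1) := mul_pos hN (by linarith)
  rw [hNc, hcard, hU, ← hodds, show ∑ k ∈ A, m k - (1 - ξ) = ∑ k ∈ Icc 1 K, m k - 1 by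
    linarith] at hkey
  have hU_nonneg : 0 ≤ (K - r) - ∑ k ∈ A, m k :=
    hU ▸ sum_nonneg fun k hk ↦ sub_nonneg.2 (hm k hk).2.le
  have hS : 0 < ∑ k ∈ A, P k / (1 - P k) := pos_of_mul_pos_right (hD.trans_le hkey) hU_nonneg
  rw [div_le_div_iff₀ hS hD]
  linarith

/-- Shuffle-aware load bound: with `r < K`, `ξ = ∑_{k=1}^{r} m k ∈ [0,1)`,
`m k ∈ [(1-ξ)/(K-r), 1)` and `P k = (m k - (1-ξ)/(K-r))/(1-(1-ξ)/(K-r)) > 0`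
for `k ∈ {r+1,...,K}`, and `∑_{k=1}^{K} m k > 1`, we have
`1/(∑_{k=r+1}^{K} P k/(1-P k)) ≤ ((K-r) - ∑_{k=r+1}^{K} m k)/((K-r)(∑_{k=1}^{K} m k - 1))`. -/
theorem stmt_13 (K r : ℕ) (hrK : r < K)
    (ξ : ℝ) (hξ0 : 0 ≤ ξ) (hξ1 : ξ < 1)
    (m P : ℕ → ℝ)
    (hξdef : ξ = ∑ k ∈ Finset.Icc 1 r, m k)
    (hm : ∀ k ∈ Finset.Icc (r + 1) K,
      (1 - ξ) / ((K : ℝ) - r) ≤ m k ∧ m k < 1)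
    (hPdef : ∀ k ∈ Finset.Icc (r + 1) K,
      P k = (m k - (1 - ξ) / ((K : ℝ) - r)) / (1 - (1 - ξ) / ((K : ℝ) - r)))
    (hPpos : ∀ k ∈ Finset.Icc (r + 1) K, 0 < P k)
    (hsum : 1 < ∑ k ∈ Finset.Icc 1 K, m k) :
    1 / (∑ k ∈ Finset.Icc (r + 1) K, P k / (1 - P k))
      ≤ (((K : ℝ) - r) - ∑ k ∈ Finset.Icc (r + 1) K, m k) /
          (((K : ℝ) - r) * ((∑ k ∈ Finset.Icc 1 K, m k) - 1)) :=
  stmt_13_general K r hrK ξ m P hξdef hm hPdef hsum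
end

section
/- Let K ≥ 2, m_1,...,m_K ∈ [0,1) sorted nondecreasingly with average m̄ = (Σ m_k)/K ≥ 0.55, and let r = max{k : (K-k+1)m_k + Σ_{i=1}^{k-1} l_i ≤ 1} with l_i defined recursively as l_1 = min(m_1, 1/K), l_k = min(m_k, (1-Σ_{i<k} l_i)/(K-k+1)), and ξ = Σ_{k=1}^{r} m_k. Then r < K and r < 0.9K. -/
/-- Node `k` (0-indexed) is low-computation-load if
`(K - k) * m k + ∑_{i<k} l i ≤ 1`. -/
def LowCL (m : ℕ → ℝ) (K k : ℕ) : Prop :=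
  ((K : ℝ) - k) * m k + allocS m K k ≤ 1

lemma lowcl_step (m : ℕ → ℝ) (K k : ℕ) (hk : k + 1 < K)
    (hmk : m k ≤ m (k+1)) (h1 : LowCL m K (k+1)) : LowCL m K k := by
  by_contra h
  unfold LowCL at h h1
  set S := allocS m K k with hS
  have hKk : (0:ℝ) < (K:ℝ) - k := by
    have h' : (k:ℝ) + 1 < K := by exact_mod_cast hk
    linarith
  push_neg at h
  have hc : (1 - S) / ((K:ℝ) - k) < m k := by
    rw [div_lt_iff₀ hKk]
    nlinarith
  have hSsucc : allocS m K (k+1) = S + (1 - S) / ((K:ℝ) - k) := by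
    show S + min (m k) ((1 - S) / ((K : ℝ) - k)) = _
    rw [min_eq_right hc.le]
  rw [hSsucc] at h1
  have hcast : ((k+1 : ℕ) : ℝ) = (k:ℝ) + 1 := by push_cast; ring
  rw [hcast] at h1
  have hpos : (0:ℝ) < (K:ℝ) - k - 1 := by
    have : ((k:ℝ) + 1) < K := by exact_mod_cast hk
    linarith
  have hcm : (1 - S) = ((1 - S) / ((K:ℝ) - k)) * ((K:ℝ) - k) := by
    field_simp
  set c := (1 - S) / ((K:ℝ) - k) with hcdef
  -- h1 : (K - k - 1) * m (k+1) + (S + c) ≤ 1, with 1 - S = c*(K-k)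
  nlinarith [mul_lt_mul_of_pos_left (hc.trans_le hmk) hpos]

/-- Let `K ≥ 2`, `m 0 ≤ ... ≤ m (K-1)` in `[0,1)` with average `m̄ ≥ 0.55`, and
let `r` be the number of low-computation-load nodes, i.e. nodes `0,...,r-1` are
LowCL (witnessed by node `r-1` when `r ≥ 1`) and no node `k` with `r ≤ k < K`
is LowCL. Then `r < K` and `r < 0.9·K`. -/
theorem stmt_15 (K : ℕ) (hK : 2 ≤ K) (m : ℕ → ℝ)
    (hm : ∀ k < K, 0 ≤ m k ∧ m k < 1)
    (hmono : ∀ i j, i ≤ j → j < K → m i ≤ m j)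
    (havg : 0.55 ≤ (∑ k ∈ Finset.range K, m k) / (K : ℝ))
    (r : ℕ) (hrK : r ≤ K)
    (hrmax1 : 1 ≤ r → LowCL m K (r - 1))
    (hrmax2 : ∀ k, r ≤ k → k < K → ¬ LowCL m K k) :
    r < K ∧ (r : ℝ) < 0.9 * K := by
  have hKpos : (0:ℝ) < K := by exact_mod_cast Nat.lt_of_lt_of_le (by norm_num) hK
  have hsum_ge : 0.55 * K ≤ ∑ k ∈ Finset.range K, m k := by
    rw [le_div_iff₀ hKpos] at havg; linarith
  -- all nodes below r are LowCL
  have alllow : ∀ k, k < r → LowCL m K k := by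
    intro k hk
    have h1r : 1 ≤ r := by omega
    have key : ∀ d j, j + d = r - 1 → LowCL m K j := by
      intro d
      induction d with
      | zero =>
        intro j hj
        have hj' : j = r - 1 := by omega
        rw [hj']; exact hrmax1 h1r
      | succ n ih =>
        intro j hj
        have hj1 : (j+1) + n = r - 1 := by omega
        have := ih (j+1) hj1
        apply lowcl_step m K j ?_ ?_ this
        · omega
        · exact hmono j (j+1) (by omega) (by omega)
    exact key (r - 1 - k) k (by omega)
  -- allocS equals partial sums of m up to r
  have hSsum : ∀ k, k ≤ r → allocS m K k = ∑ i ∈ Finset.range k, m i := by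
    intro k hk
    induction k with
    | zero => simp [allocS]
    | succ n ih =>
      have hn : n ≤ r := by omega
      have hlow := alllow n (by omega)
      unfold LowCL at hlow
      have hKn : (0:ℝ) < (K:ℝ) - n := by
        have : (n:ℝ) < K := by exact_mod_cast Nat.lt_of_lt_of_le (by omega) hrK
        linarith
      have hmn : m n ≤ (1 - allocS m K n) / ((K:ℝ) - n) := by
        rw [le_div_iff₀ hKn]; nlinarith
      show allocS m K n + min (m n) _ = _
      rw [min_eq_left hmn, ih hn, Finset.sum_range_succ]
  -- r < K
  have hrltK : r < K := by
    rcases Nat.lt_or_ge r K with h | h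
    · exact h
    · exfalso
      have hrk : r = K := le_antisymm hrK h
      have h1r : 1 ≤ r := by omega
      have hlow := hrmax1 h1r
      unfold LowCL at hlow
      rw [hSsum (r-1) (by omega)] at hlow
      have hcast : ((r - 1 : ℕ) : ℝ) = (K:ℝ) - 1 := by
        rw [hrk]; push_cast [Nat.cast_sub (by omega : 1 ≤ K)]; ring
      rw [hcast, hrk] at hlow
      -- hlow : (K - (K-1)) * m (K-1) + ∑_{i<K-1} m i ≤ 1
      have e : K - 1 + 1 = K := by omega
      have hsumK := Finset.sum_range_succ m (K-1)
      rw [e] at hsumK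
      have h2K : (2:ℝ) ≤ K := by exact_mod_cast hK
      nlinarith [hsum_ge]
  refine ⟨hrltK, ?_⟩
  rcases Nat.eq_zero_or_pos r with hr0 | hrpos
  · subst hr0; simp only [Nat.cast_zero]; nlinarith
  -- now 1 ≤ r < K
  have hrm1K : r - 1 < K := by omega
  have hx1 : ∑ k ∈ Finset.range r, m k ≤ (r : ℝ) * m (r-1) := by
    calc ∑ k ∈ Finset.range r, m k ≤ ∑ _k ∈ Finset.range r, m (r-1) := by
          apply Finset.sum_le_sum
          intro i hi
          exact hmono i (r-1) (by simp at hi; omega) hrm1K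
    _ = (r:ℝ) * m (r-1) := by simp [mul_comm]
  have hlow := hrmax1 hrpos
  unfold LowCL at hlow
  rw [hSsum (r-1) (by omega)] at hlow
  have hcast : ((r - 1 : ℕ) : ℝ) = (r:ℝ) - 1 := by
    push_cast [Nat.cast_sub (by omega : 1 ≤ r)]; ring
  rw [hcast] at hlow
  have hSnn : 0 ≤ ∑ i ∈ Finset.range (r-1), m i :=
    Finset.sum_nonneg fun i hi => (hm i (by simp at hi; omega)).1
  have hx2 : ((K:ℝ) - r + 1) * m (r-1) ≤ 1 := by nlinarith
  have hx3 : ∑ k ∈ Finset.Ico r K, m k < ((K:ℝ) - r) := by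
    have hne : (Finset.Ico r K).Nonempty := by
      rw [Finset.nonempty_Ico]; omega
    calc ∑ k ∈ Finset.Ico r K, m k < ∑ _k ∈ Finset.Ico r K, (1:ℝ) := by
          apply Finset.sum_lt_sum_of_nonempty hne
          intro i hi
          simp at hi
          exact (hm i hi.2).2
    _ = ((K:ℝ) - r) := by
          rw [Finset.sum_const, Nat.card_Ico, nsmul_eq_mul, mul_one, Nat.cast_sub hrK]
  have hsplit : ∑ k ∈ Finset.range K, m k
      = ∑ k ∈ Finset.range r, m k + ∑ k ∈ Finset.Ico r K, m k := by
    rw [← Finset.sum_range_add_sum_Ico m hrK]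
  have hmr1nn : 0 ≤ m (r-1) := (hm (r-1) hrm1K).1
  have hrK2 : (r:ℝ) + 1 ≤ K := by exact_mod_cast hrltK
  -- ξ > r - 0.45K and ξ ≤ r * m(r-1) ≤ r/2
  nlinarith [hsum_ge, mul_le_mul_of_nonneg_left hx2 (Nat.cast_nonneg r : (0:ℝ) ≤ r)]
end

section
/- For a distributed computing system with K nodes where node k maps a fraction m_k ∈ [0,1] of the N files (allocated in sets M_k with |M_k| = m_k N) and reduces a fraction w_k ∈ [0,1] of the Q output functions (with Σ w_k = 1), the minimum communication load satisfies L* ≥ max over subsets T ⊆ {1,...,K} of (1 - Σ_{k∈T} m_k)·(Σ_{k∈T} w_k), assuming the intermediate values are independent and uniform. -/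
/-! Cut-set argument. Fix every intermediate value to a default except those of the functions
reduced in `S` on the files mapped by no node of `S`. The nodes of `S` then see nothing that varies
except the broadcast, yet between them they must recover this whole block, so the broadcast is
injective on it: `2 ^ ∑ ℓ ≥ 2 ^ (Tb · |⋃_S W| · |(⋃_S M)ᶜ|)`. Disjointness of the `W k` gives
`|⋃_S W| = Q ∑_S w`, and `|(⋃_S M)ᶜ| ≥ N (1 - ∑_S m)`. -/

open Finset

section Cut

variable {K I J β : Type*} [DecidableEq I] [DecidableEq J] [Inhabited β]

def blockExtend (A : Finset I) (B : Finset J) (u : A → B → β) : I → J → β :=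
  fun i j => if h : i ∈ A ∧ j ∈ B then u ⟨i, h.1⟩ ⟨j, h.2⟩ else default

theorem blockExtend_apply_of_mem {A : Finset I} {B : Finset J} (u : A → B → β)
    (i : A) (j : B) : blockExtend A B u i j = u i j :=
  dif_pos ⟨i.2, j.2⟩

theorem blockExtend_apply_of_notMem_right {A : Finset I} {B : Finset J} (u : A → B → β)
    (i : I) {j : J} (hj : j ∉ B) : blockExtend A B u i j = default :=
  dif_neg fun h => hj h.2

variable [Fintype J] {γ : K → Type*} (M : K → Finset J) (W : K → Finset I)
  (enc : ∀ k, (I → J → β) → γ k)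
  (dec : ∀ k, (∀ j, γ j) → (I → {n // n ∈ M k} → β) → I → J → β)
  (hdec : ∀ k v q n, q ∈ W k → dec k (fun j => enc j v) (fun q n => v q n.1) q n = v q n)
include hdec

theorem broadcast_injective_on_cut (S : Finset K) :
    Function.Injective fun u : S.biUnion W → ↥(S.biUnion M)ᶜ → β =>
      fun k => enc k (blockExtend _ _ u) := by
  intro u u' h
  funext i j
  obtain ⟨k, hkS, hik⟩ := mem_biUnion.mp i.2
  have hlocal : (fun q (n : {n // n ∈ M k}) => blockExtend _ _ u q n.1)
      = fun q n => blockExtend _ _ u' q n.1 := by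
    funext q n
    have hn : n.1 ∉ (S.biUnion M)ᶜ := notMem_compl.mpr (mem_biUnion.mpr ⟨k, hkS, n.2⟩)
    rw [blockExtend_apply_of_notMem_right _ _ hn, blockExtend_apply_of_notMem_right _ _ hn]
  calc u i j = blockExtend _ _ u i j := (blockExtend_apply_of_mem u i j).symm
    _ = dec k (fun j => enc j (blockExtend _ _ u)) (fun q n => blockExtend _ _ u q n.1) i j :=
      (hdec k _ i j hik).symm
    _ = dec k (fun j => enc j (blockExtend _ _ u')) (fun q n => blockExtend _ _ u' q n.1) i j := by
      rw [show (fun j => enc j (blockExtend _ _ u)) = _ from h, hlocal]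
    _ = blockExtend _ _ u' i j := hdec k _ i j hik
    _ = u' i j := blockExtend_apply_of_mem u' i j

theorem card_pow_cut_le_prod_card [Fintype K] [Fintype β] [∀ k, Fintype (γ k)] (S : Finset K) :
    Fintype.card β ^ (#(S.biUnion W) * #(S.biUnion M)ᶜ) ≤ ∏ k, Fintype.card (γ k) := by
  classical
  have := Fintype.card_le_of_injective _ (broadcast_injective_on_cut M W enc dec hdec S)
  rwa [Fintype.card_fun, Fintype.card_fun, Fintype.card_coe, Fintype.card_coe, ← pow_mul,
    mul_comm, Fintype.card_pi] at this

end Cut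

theorem stmt_17_general (K Q N Tb : ℕ) (hN : 0 < N) (hT : 0 < Tb)
    (M : Fin K → Finset (Fin N)) (W : Fin K → Finset (Fin Q))
    (hWdisj : ∀ j k : Fin K, j ≠ k → Disjoint (W j) (W k))
    (ℓ : Fin K → ℕ)
    (enc : ∀ k : Fin K, (Fin Q → Fin N → (Fin Tb → Bool)) → (Fin (ℓ k) → Bool))
    (dec : ∀ k : Fin K, (∀ j : Fin K, Fin (ℓ j) → Bool) →
      (Fin Q → {n : Fin N // n ∈ M k} → (Fin Tb → Bool)) →
      (Fin Q → Fin N → (Fin Tb → Bool)))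
    (hdec : ∀ (k : Fin K) (v : Fin Q → Fin N → (Fin Tb → Bool)) (q : Fin Q) (n : Fin N),
      q ∈ W k → dec k (fun j => enc j v) (fun q n => v q n.1) q n = v q n) :
    ∀ S : Finset (Fin K),
      (1 - ∑ k ∈ S, ((M k).card : ℝ) / N) * (∑ k ∈ S, ((W k).card : ℝ) / Q)
        ≤ (∑ k, (ℓ k : ℝ)) / ((Q : ℝ) * N * Tb) := by
  intro S
  have hbits : #(S.biUnion W) * #(S.biUnion M)ᶜ * Tb ≤ ∑ k, ℓ k := by
    have := card_pow_cut_le_prod_card M W enc dec hdec S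
    simp only [Fintype.card_fun, Fintype.card_bool, Fintype.card_fin, prod_pow_eq_pow_sum,
      ← pow_mul] at this
    rw [mul_comm]
    exact (Nat.pow_le_pow_iff_right one_lt_two).mp this
  have hW : (#(S.biUnion W) : ℝ) = ∑ k ∈ S, (#(W k) : ℝ) := by
    rw [card_biUnion fun j _ k _ hjk => hWdisj j k hjk]
    push_cast; rfl
  have hM : (N : ℝ) - ∑ k ∈ S, (#(M k) : ℝ) ≤ #(S.biUnion M)ᶜ := by
    rw [card_compl, Fintype.card_fin, Nat.cast_sub (card_le_univ _ |>.trans_eq (card_fin N))]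
    exact sub_le_sub_left (mod_cast card_biUnion_le) _
  have hN0 : (N : ℝ) ≠ 0 := by positivity
  have hT0 : (Tb : ℝ) ≠ 0 := by positivity
  calc (1 - ∑ k ∈ S, (#(M k) : ℝ) / N) * (∑ k ∈ S, (#(W k) : ℝ) / Q)
      = #(S.biUnion W) * (N - ∑ k ∈ S, (#(M k) : ℝ)) * Tb / (Q * N * Tb) := by
        rw [← sum_div, ← sum_div, hW]
        field_simp
    _ ≤ #(S.biUnion W) * #(S.biUnion M)ᶜ * Tb / (Q * N * Tb) := by gcongr
    _ ≤ (∑ k, (ℓ k : ℝ)) / (Q * N * Tb) := by gcongr; exact_mod_cast hbits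

/-- Cut-set lower bound for MapReduce (Lemma 1). The system has `K` nodes,
`Q` output functions, `N` files, and `Tb`-bit intermediate values (IVs), modeled
as arbitrary (hence independent, uniform) tables `v : Fin Q → Fin N → (Fin Tb → Bool)`.
Node `k` maps the files `M k` (so `m k = |M k|/N`), reduces the functions `W k`
(pairwise disjoint, covering all of `Fin Q`, so `∑ w k = 1`), broadcasts an
`ℓ k`-bit message depending only on the IVs of its files, and must recover all
IVs of its assigned functions from the broadcast messages and its local IVs.
Then for every cut `S ⊆ {1,...,K}`, the communication load `L = ∑ ℓ k/(QNTb)`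
satisfies `L ≥ (1 - ∑_{k∈S} m k)·(∑_{k∈S} w k)`. -/
theorem stmt_17 (K Q N Tb : ℕ) (hK : 0 < K) (hQ : 0 < Q) (hN : 0 < N) (hT : 0 < Tb)
    (M : Fin K → Finset (Fin N)) (W : Fin K → Finset (Fin Q))
    (hWdisj : ∀ j k : Fin K, j ≠ k → Disjoint (W j) (W k))
    (hWcover : ∀ q : Fin Q, ∃ k : Fin K, q ∈ W k)
    (ℓ : Fin K → ℕ)
    (enc : ∀ k : Fin K, (Fin Q → Fin N → (Fin Tb → Bool)) → (Fin (ℓ k) → Bool))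
    (henc : ∀ (k : Fin K) (v v' : Fin Q → Fin N → (Fin Tb → Bool)),
      (∀ q n, n ∈ M k → v q n = v' q n) → enc k v = enc k v')
    (dec : ∀ k : Fin K, (∀ j : Fin K, Fin (ℓ j) → Bool) →
      (Fin Q → {n : Fin N // n ∈ M k} → (Fin Tb → Bool)) →
      (Fin Q → Fin N → (Fin Tb → Bool)))
    (hdec : ∀ (k : Fin K) (v : Fin Q → Fin N → (Fin Tb → Bool)) (q : Fin Q) (n : Fin N),
      q ∈ W k → dec k (fun j => enc j v) (fun q n => v q n.1) q n = v q n) :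
    ∀ S : Finset (Fin K),
      (1 - ∑ k ∈ S, ((M k).card : ℝ) / N) * (∑ k ∈ S, ((W k).card : ℝ) / Q)
        ≤ (∑ k, (ℓ k : ℝ)) / ((Q : ℝ) * N * Tb) :=
  stmt_17_general K Q N Tb hN hT M W hWdisj ℓ enc dec hdec
end
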